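/- arXiv:2110.15798 — 2 statements merged into one kernel-verified Lean document; each statement's English description precedes it below -/
import Mathlib

section
/- Let n = φ_S(λ·Card(D)) where 1 < λ ≤ Card(Γ)/Card(D). Then there exists y ∈ B_S(n) with Card(y⁻¹D ∩ D) ≤ Card(D)/λ. -/
open Set Filter

/-- The ball of radius `n` in the word metric: elements expressible as a product
of at most `n` elements of `S`. -/
def wordBall {G : Type*} [Group G] (S : Set G) (n : ℕ) : Set G :=
  {x | ∃ l : List G, l.length ≤ n ∧ (∀ s ∈ l, s ∈ S) ∧ l.prod = x}

/-- The growth function `γ_S(n) = Card(B_S(n))`. -/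
noncomputable def growth {G : Type*} [Group G] (S : Set G) (n : ℕ) : ℕ :=
  (wordBall S n).ncard

/-- The word norm `‖x‖_S`. -/
noncomputable def wordNorm {G : Type*} [Group G] (S : Set G) (x : G) : ℕ :=
  sInf {n | x ∈ wordBall S n}

/-- The reverse growth function `φ_S(t) = min {n | γ_S(n) ≥ t}`. -/
noncomputable def phiS {G : Type*} [Group G] (S : Set G) (t : ℝ) : ℕ :=
  sInf {n | t ≤ (growth S n : ℝ)}

/-- The interior boundary `∂_S D`. -/
def intBoundary {G : Type*} [Group G] (S : Set G) (D : Set G) : Set G :=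
  {x ∈ D | ∃ s ∈ S, s * x ∉ D}

/-- The exterior boundary `∂'_S D`. -/
def extBoundary {G : Type*} [Group G] (S : Set G) (D : Set G) : Set G :=
  {x | x ∉ D ∧ ∃ s ∈ S, s * x ∈ D}

/-!
Double counting: for finite `B` and `D`,
`∑_{y ∈ B} |{x ∈ D | y x ∈ D}| = ∑_{x ∈ D} |{y ∈ B | y x ∈ D}| ≤ |D|²`, since `y ↦ y x` is
injective. So some `y ∈ B` has `|{x ∈ D | y x ∈ D}| ≤ |D|² / |B|`, and for `B = B_S(n)` with
`n = φ_S(λ |D|)` we have `|B| ≥ λ |D|`. Such an `n` exists because the balls are finite and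
exhaust `Γ`.
-/

open Finset

theorem Finset.exists_mem_card_mul_card_filter_mul_mem_le {G : Type*} [Mul G]
    [IsRightCancelMul G] [DecidableEq G] (B D : Finset G) (hB : B.Nonempty) :
    ∃ y ∈ B, #B * #{x ∈ D | y * x ∈ D} ≤ #D * #D := by
  have hfiber : ∀ x ∈ D, #{y ∈ B | y * x ∈ D} ≤ #D := fun x _ ↦
    card_le_card_of_injOn (· * x) (fun _ hy ↦ (mem_filter.1 hy).2)
      (fun _ _ _ _ ↦ mul_right_cancel)
  have hcount : ∑ y ∈ B, #{x ∈ D | y * x ∈ D} ≤ #D * #D :=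
    calc ∑ y ∈ B, #{x ∈ D | y * x ∈ D}
        = ∑ x ∈ D, #{y ∈ B | y * x ∈ D} :=
          sum_card_bipartiteAbove_eq_sum_card_bipartiteBelow fun y x ↦ y * x ∈ D
      _ ≤ ∑ _x ∈ D, #D := sum_le_sum hfiber
      _ = #D * #D := by rw [sum_const, smul_eq_mul]
  refine exists_le_of_sum_le hB ?_
  rw [← mul_sum, sum_const, smul_eq_mul]
  exact Nat.mul_le_mul_left _ hcount

section WordBall

variable {G : Type*} [Group G] (S : Set G)

lemma one_mem_wordBall (n : ℕ) : (1 : G) ∈ wordBall S n :=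
  ⟨[], by simp⟩

lemma wordBall_mono {m n : ℕ} (h : m ≤ n) : wordBall S m ⊆ wordBall S n := by
  rintro x ⟨l, hl, hs, hp⟩
  exact ⟨l, hl.trans h, hs, hp⟩

variable {S}

lemma wordBall_finite (hS : S.Finite) (n : ℕ) : (wordBall S n).Finite := by
  have := hS.to_subtype
  refine ((List.finite_length_le S n).image fun l : List S ↦ (l.map (↑)).prod).subset ?_
  rintro _ ⟨l, hl, hs, rfl⟩
  lift l to List S using hs
  exact ⟨l, by simpa using hl, rfl⟩

lemma exists_mem_wordBall (hSsym : ∀ s ∈ S, s⁻¹ ∈ S) (hSgen : Subgroup.closure S = ⊤)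
    (x : G) : ∃ n, x ∈ wordBall S n := by
  have hx : x ∈ (Subgroup.closure S).toSubmonoid := hSgen ▸ Subgroup.mem_top x
  have hinv : S⁻¹ ⊆ S := fun s hs ↦ inv_inv s ▸ hSsym _ hs
  rw [Subgroup.closure_toSubmonoid, Set.union_eq_left.2 hinv] at hx
  obtain ⟨l, hl, rfl⟩ := Submonoid.exists_list_of_mem_closure hx
  exact ⟨l.length, l, le_rfl, hl, rfl⟩

lemma exists_subset_wordBall (hSsym : ∀ s ∈ S, s⁻¹ ∈ S) (hSgen : Subgroup.closure S = ⊤)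
    (F : Finset G) : ∃ n, ↑F ⊆ wordBall S n := by
  choose r hr using exists_mem_wordBall hSsym hSgen
  exact ⟨F.sup r, fun x hx ↦ wordBall_mono S (Finset.le_sup hx) (hr x)⟩

lemma exists_le_growth (hSfin : S.Finite) (hSsym : ∀ s ∈ S, s⁻¹ ∈ S)
    (hSgen : Subgroup.closure S = ⊤) {t : ℝ} (ht : Finite G → t ≤ Nat.card G) :
    ∃ n, t ≤ growth S n := by
  obtain ⟨F, hF⟩ : ∃ F : Finset G, t ≤ F.card := by
    cases finite_or_infinite G
    · have := Fintype.ofFinite G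
      exact ⟨Finset.univ, by simpa [Nat.card_eq_fintype_card] using ht ‹_›⟩
    · obtain ⟨F, hF⟩ := Infinite.exists_subset_card_eq G ⌈t⌉₊
      exact ⟨F, hF ▸ Nat.le_ceil t⟩
  obtain ⟨n, hn⟩ := exists_subset_wordBall hSsym hSgen F
  refine ⟨n, hF.trans ?_⟩
  rw [← Set.ncard_coe_finset]
  exact_mod_cast Set.ncard_le_ncard hn (wordBall_finite hSfin n)

lemma le_growth_phiS {t : ℝ} (h : ∃ n, t ≤ growth S n) : t ≤ growth S (phiS S t) :=
  Nat.sInf_mem h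

end WordBall

theorem stmt_3 {G : Type*} [Group G] (S : Set G) (hSfin : S.Finite)
    (hSsym : ∀ s ∈ S, s⁻¹ ∈ S) (hSgen : Subgroup.closure S = ⊤)
    (D : Set G) (hDfin : D.Finite) (hDne : D.Nonempty)
    (lam : ℝ) (hlam : 1 < lam)
    (hcard : Finite G → lam * (D.ncard : ℝ) ≤ (Nat.card G : ℝ)) :
    ∃ y ∈ wordBall S (phiS S (lam * (D.ncard : ℝ))),
      (({x ∈ D | y * x ∈ D}).ncard : ℝ) ≤ (D.ncard : ℝ) / lam := by
  classical
  have hB := le_growth_phiS (exists_le_growth hSfin hSsym hSgen hcard)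
  set n := phiS S (lam * D.ncard)
  lift D to Finset G using hDfin
  obtain ⟨B, hBn⟩ := (wordBall_finite hSfin n).exists_finset_coe
  rw [growth, ← hBn] at hB
  obtain ⟨y, hyB, hy⟩ := B.exists_mem_card_mul_card_filter_mul_mem_le D
    ⟨1, by simpa [← hBn] using one_mem_wordBall S n⟩
  refine ⟨y, hBn ▸ hyB, ?_⟩
  have hD : (0 : ℝ) < #D := by simpa using hDne
  have hfilter : {x ∈ (D : Set G) | y * x ∈ (D : Set G)} = ↑{x ∈ D | y * x ∈ D} :=
    (coe_filter _ _).symm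
  simp only [hfilter, Set.ncard_coe_finset] at hB ⊢
  rw [le_div_iff₀ (by linarith)]
  refine le_of_mul_le_mul_left ?_ hD
  calc (#D : ℝ) * (#{x ∈ D | y * x ∈ D} * lam) = lam * #D * #{x ∈ D | y * x ∈ D} := by ring
    _ ≤ #B * #{x ∈ D | y * x ∈ D} := by gcongr
    _ ≤ #D * #D := by exact_mod_cast hy
end

section
/- Suppose γ_S(n−1) ≥ C·e^{b·n^α} for all integers n ≥ 1, with constants C > 0, b > 0, 0 < α ≤ 1. Then there is a function μ : ℝ₊ → ℝ with μ(v) → 1 as v → ∞ such that every nonempty finite D ⊆ Γ satisfies Card(∂_S D) ≥ μ(Card(D)) · Card(D) / ((1/b)·log(Card(D)))^{1/α}. -/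
/-!
If the ball of radius `n` has at least `K |D|` elements, averaging over its elements `g`
finds one with `g x ∈ D` for at most `|D| / K` points `x ∈ D`. Every other point is carried out
of `D` by a word of length `≤ n` in `S`, which leaves `D` through `∂_S D` at one of its letters,
and for a fixed letter the exit point determines `x`; hence `(1 - 1/K) |D| ≤ n |∂_S D|`.
With `K = log |D|`, the growth hypothesis provides such an
`n ≈ ((1/b) log (|D| log |D| / C))^{1/α}`, which is `((1/b) log |D|)^{1/α} (1 + o(1))`.
-/

open Set Filter

open Real Topology
open scoped Finset

section Isoperimetry

variable {G : Type*} [Group G] (S : Set G)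

theorem card_filter_list_prod_mul_notMem_le [DecidableEq G] (D : Finset G) {l : List G}
    (hl : ∀ s ∈ l, s ∈ S) :
    #{x ∈ D | l.prod * x ∉ D} ≤ l.length * (intBoundary S D).ncard := by
  induction l with
  | nil => simp
  | cons a t ih =>
    obtain ⟨ha, ht⟩ := List.forall_mem_cons.1 hl
    have hexit :
        #{x ∈ D | t.prod * x ∈ D ∧ a * (t.prod * x) ∉ D} ≤ (intBoundary S D).ncard := by
      rw [← Set.ncard_coe_finset]
      refine Set.ncard_le_ncard_of_injOn (t.prod * ·) ?_ (mul_right_injective _).injOn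
        (D.finite_toSet.subset fun _ hx => hx.1)
      intro x hx
      obtain ⟨-, hxD, hx⟩ := Finset.mem_filter.1 (Finset.mem_coe.1 hx)
      exact ⟨hxD, a, ha, hx⟩
    calc #{x ∈ D | (a :: t).prod * x ∉ D}
        ≤ #({x ∈ D | t.prod * x ∉ D} ∪
            {x ∈ D | t.prod * x ∈ D ∧ a * (t.prod * x) ∉ D}) := by
          refine Finset.card_le_card fun x hx => ?_
          simp only [List.prod_cons, mul_assoc, Finset.mem_filter, Finset.mem_union] at hx ⊢
          tauto
      _ ≤ t.length * (intBoundary S D).ncard + (intBoundary S D).ncard :=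
          (Finset.card_union_le _ _).trans (add_le_add (ih ht) hexit)
      _ = (a :: t).length * (intBoundary S D).ncard := by simp [add_mul]

theorem exists_card_mul_card_filter_mul_mem_le [DecidableEq G] {B : Finset G} (hB : B.Nonempty)
    (D : Finset G) : ∃ g ∈ B, #B * #{x ∈ D | g * x ∈ D} ≤ #D * #D := by
  refine Finset.exists_le_of_sum_le hB ?_
  rw [← Finset.mul_sum, Finset.sum_const, smul_eq_mul]
  refine Nat.mul_le_mul_left _ ?_
  calc ∑ g ∈ B, #{x ∈ D | g * x ∈ D}
      = ∑ x ∈ D, #{g ∈ B | g * x ∈ D} :=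
        Finset.sum_card_bipartiteAbove_eq_sum_card_bipartiteBelow (fun g x => g * x ∈ D)
    _ ≤ ∑ _x ∈ D, #D := Finset.sum_le_sum fun x _ =>
        Finset.card_le_card_of_injOn (· * x) (fun _ hg => (Finset.mem_filter.1 hg).2)
          (mul_left_injective x).injOn
    _ = #D * #D := by rw [Finset.sum_const, smul_eq_mul]

theorem one_sub_inv_mul_card_le_mul_ncard_intBoundary (D : Finset G) {n : ℕ} {K : ℝ}
    (hK : 0 < K) (hball : K * #D ≤ growth S n) :
    (1 - K⁻¹) * #D ≤ n * (intBoundary S D).ncard := by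
  classical
  rcases D.eq_empty_or_nonempty with rfl | hD
  · simp only [Finset.card_empty, CharP.cast_eq_zero, mul_zero]
    positivity
  have hfin : (wordBall S n).Finite := Set.finite_of_ncard_pos <| by
    exact_mod_cast (mul_pos hK (by exact_mod_cast hD.card_pos)).trans_le hball
  have hone : (1 : G) ∈ hfin.toFinset := hfin.mem_toFinset.2 ⟨[], by simp, by simp, rfl⟩
  obtain ⟨g, hgB, hg⟩ := exists_card_mul_card_filter_mul_mem_le ⟨1, hone⟩ D
  obtain ⟨l, hl, hlS, rfl⟩ := hfin.mem_toFinset.1 hgB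
  have hB : (#hfin.toFinset : ℝ) = growth S n := by
    rw [growth, Set.ncard_eq_toFinset_card _ hfin]
  have hsplit := Finset.card_filter_add_card_filter_not (s := D) (fun x => l.prod * x ∈ D)
  have hexit := card_filter_list_prod_mul_notMem_le S D hlS
  have hD0 : (0 : ℝ) < #D := by exact_mod_cast hD.card_pos
  have hstay : (#{x ∈ D | l.prod * x ∈ D} : ℝ) ≤ K⁻¹ * #D := by
    rw [inv_mul_eq_div, le_div_iff₀ hK]
    refine le_of_mul_le_mul_left ?_ hD0
    calc (#D : ℝ) * (#{x ∈ D | l.prod * x ∈ D} * K)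
        ≤ #hfin.toFinset * #{x ∈ D | l.prod * x ∈ D} := by rw [hB]; nlinarith
      _ ≤ #D * #D := by exact_mod_cast hg
  calc (1 - K⁻¹) * #D ≤ #D - #{x ∈ D | l.prod * x ∈ D} := by linarith
    _ = #{x ∈ D | l.prod * x ∉ D} := by rw [← hsplit]; push_cast; ring
    _ ≤ l.length * (intBoundary S D).ncard := by exact_mod_cast hexit
    _ ≤ n * (intBoundary S D).ncard := by gcongr

end Isoperimetry

theorem mul_le_apply_natCeil_of_exp_rpow_le {f : ℕ → ℝ} {C b α : ℝ} (hC : 0 ≤ C)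
    (hb : 0 < b) (hα : 0 < α)
    (hf : ∀ n : ℕ, 1 ≤ n → C * exp (b * (n : ℝ) ^ α) ≤ f (n - 1))
    {t : ℝ} (ht : 0 < t) : C * t ≤ f ⌈((1 / b) * log t) ^ (1 / α)⌉₊ := by
  set m := ⌈((1 / b) * log t) ^ (1 / α)⌉₊
  have hlog : log t ≤ b * ((m + 1 : ℕ) : ℝ) ^ α := by
    rcases le_or_gt (log t) 0 with hneg | hpos
    · exact hneg.trans (by positivity)
    have hM : 0 ≤ (1 / b) * log t := by positivity
    calc log t = b * (((1 / b) * log t) ^ (1 / α)) ^ α := by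
          rw [← rpow_mul hM, one_div_mul_cancel hα.ne', rpow_one]; field_simp
      _ ≤ b * ((m + 1 : ℕ) : ℝ) ^ α := by
          gcongr
          exact (Nat.le_ceil _).trans (by push_cast; linarith)
  calc C * t = C * exp (log t) := by rw [exp_log ht]
    _ ≤ C * exp (b * ((m + 1 : ℕ) : ℝ) ^ α) := by gcongr
    _ ≤ f m := hf (m + 1) m.succ_pos

theorem tendsto_rpow_div_natCeil_rpow {ι : Type*} {l : Filter ι} {f g : ι → ℝ} {p : ℝ}
    (hp : 0 < p) (hg : Tendsto g l atTop) (hfg : Tendsto (fun i => f i / g i) l (𝓝 1)) :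
    Tendsto (fun i => f i ^ p / ⌈g i ^ p⌉₊) l (𝓝 1) := by
  have hgp : Tendsto (fun i => g i ^ p) l atTop := (tendsto_rpow_atTop hp).comp hg
  have hceil := tendsto_nat_ceil_div_atTop.comp hgp
  have hratio := hfg.rpow_const (p := p) (Or.inl one_ne_zero)
  rw [one_rpow] at hratio
  have hlim : Tendsto (fun i => (f i / g i) ^ p / (⌈g i ^ p⌉₊ / g i ^ p)) l (𝓝 1) := by
    have h := hratio.div hceil one_ne_zero
    rw [div_one] at h
    exact h
  refine hlim.congr' ?_
  filter_upwards [hg.eventually_gt_atTop 0, hfg.eventually (lt_mem_nhds one_pos)]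
    with i hgi hfgi
  have hfi : 0 < f i := by simpa [div_pos_iff_of_pos_right hgi] using hfgi
  have : 0 < g i ^ p := rpow_pos_of_pos hgi p
  rw [div_rpow hfi.le hgi.le]
  field_simp

theorem tendsto_log_div_log_log_mul_div_const {C : ℝ} (hC : C ≠ 0) :
    Tendsto (fun v => log v / log (log v * v / C)) atTop (𝓝 1) := by
  have hloglog : Tendsto (fun v => log (log v) / log v) atTop (𝓝 0) := by
    simpa [Function.comp_def] using
      isLittleO_log_id_atTop.tendsto_div_nhds_zero.comp tendsto_log_atTop
  have hC' : Tendsto (fun v => log C / log v) atTop (𝓝 0) :=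
    tendsto_const_nhds.div_atTop tendsto_log_atTop
  have hlim : Tendsto (fun v => (1 + log (log v) / log v - log C / log v)⁻¹) atTop (𝓝 1) := by
    simpa using
      ((tendsto_const_nhds.add hloglog).sub hC').inv₀ (by norm_num : (1 : ℝ) + 0 - 0 ≠ 0)
  refine hlim.congr' ?_
  filter_upwards [tendsto_log_atTop.eventually_gt_atTop 0, eventually_gt_atTop 0] with v hlog hv
  rw [log_div (by positivity) hC, log_mul hlog.ne' hv.ne']
  field_simp
  ring

noncomputable def isoperimetricFactor (C b α v : ℝ) : ℝ :=
  (1 - (log v)⁻¹) *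
    (((1 / b) * log v) ^ (1 / α) / ⌈((1 / b) * log (log v * v / C)) ^ (1 / α)⌉₊)

theorem tendsto_isoperimetricFactor {C b α : ℝ} (hC : 0 < C) (hb : 0 < b) (hα : 0 < α) :
    Tendsto (isoperimetricFactor C b α) atTop (𝓝 1) := by
  have hfirst : Tendsto (fun v => 1 - (log v)⁻¹) atTop (𝓝 1) := by
    simpa using tendsto_const_nhds.sub tendsto_log_atTop.inv_tendsto_atTop
  have hM : Tendsto (fun v => (1 / b) * log (log v * v / C)) atTop atTop := by
    refine Tendsto.const_mul_atTop (one_div_pos.2 hb) (tendsto_log_atTop.comp ?_)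
    exact (tendsto_log_atTop.atTop_mul_atTop₀ tendsto_id).atTop_div_const hC
  have hratio :
      Tendsto (fun v => (1 / b) * log v / ((1 / b) * log (log v * v / C))) atTop (𝓝 1) := by
    simpa only [mul_div_mul_left _ _ (one_div_pos.2 hb).ne'] using
      tendsto_log_div_log_log_mul_div_const hC.ne'
  have h := hfirst.mul (tendsto_rpow_div_natCeil_rpow (one_div_pos.2 hα) hM hratio)
  rw [mul_one] at h
  exact h

theorem stmt_14_general {G : Type*} [Group G] (S : Set G)
    (C b α : ℝ) (hC : 0 < C) (hb : 0 < b) (hα : 0 < α)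
    (hgrowth : ∀ n : ℕ, 1 ≤ n →
      C * Real.exp (b * (n : ℝ) ^ α) ≤ (growth S (n - 1) : ℝ)) :
    ∃ μ : ℝ → ℝ, Tendsto μ atTop (nhds 1) ∧
      ∀ (D : Set G), D.Finite → D.Nonempty →
        ((intBoundary S D).ncard : ℝ) ≥
          μ (D.ncard : ℝ) * (D.ncard : ℝ) /
            ((1 / b) * Real.log (D.ncard : ℝ)) ^ (1 / α) := by
  refine ⟨isoperimetricFactor C b α, tendsto_isoperimetricFactor hC hb hα,
    fun D hDfin _ => ?_⟩
  obtain ⟨D, rfl⟩ := hDfin.exists_finset_coe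
  rw [Set.ncard_coe_finset, ge_iff_le]
  set v : ℝ := (#D : ℝ)
  rcases eq_or_ne (((1 / b) * log v) ^ (1 / α)) 0 with hL | hL
  · -- `|D| = 1`, where the right-hand side is a division by zero
    rw [hL, div_zero]
    positivity
  have hlog : 0 < log v :=
    (log_natCast_nonneg #D).lt_of_ne' fun h => hL (by simp [v, h, hα.ne'])
  set n := ⌈((1 / b) * log (log v * v / C)) ^ (1 / α)⌉₊
  have hball : log v * v ≤ growth S n := by
    have h := mul_le_apply_natCeil_of_exp_rpow_le (f := fun n => (growth S n : ℝ)) hC.le hb hα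
      hgrowth (t := log v * v / C) (by positivity)
    rwa [mul_div_cancel₀ _ hC.ne'] at h
  have hiso := one_sub_inv_mul_card_le_mul_ncard_intBoundary S D hlog hball
  calc isoperimetricFactor C b α v * v / ((1 / b) * log v) ^ (1 / α)
        = (1 - (log v)⁻¹) * v / n := by
        change (1 - (log v)⁻¹) * (((1 / b) * log v) ^ (1 / α) / n) * v / _ = _
        field_simp
    _ ≤ (intBoundary S D).ncard := div_le_of_le_mul₀ n.cast_nonneg (by positivity) (by linarith)

theorem stmt_14 {G : Type*} [Group G] [Infinite G] (S : Set G) (hSfin : S.Finite)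
    (hSsym : ∀ s ∈ S, s⁻¹ ∈ S) (hSgen : Subgroup.closure S = ⊤)
    (C b α : ℝ) (hC : 0 < C) (hb : 0 < b) (hα : 0 < α) (hα1 : α ≤ 1)
    (hgrowth : ∀ n : ℕ, 1 ≤ n →
      C * Real.exp (b * (n : ℝ) ^ α) ≤ (growth S (n - 1) : ℝ)) :
    ∃ μ : ℝ → ℝ, Tendsto μ atTop (nhds 1) ∧
      ∀ (D : Set G), D.Finite → D.Nonempty →
        ((intBoundary S D).ncard : ℝ) ≥
          μ (D.ncard : ℝ) * (D.ncard : ℝ) /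
            ((1 / b) * Real.log (D.ncard : ℝ)) ^ (1 / α) :=
  stmt_14_general S C b α hC hb hα hgrowth
end
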